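/- Let q_1 : ℝ → ℝ be smooth with q_1''(x) > 0 for all x, and define q_3 = (2 q_1'')^{−1/2} and q_2 = ½ (5 (q_1''')² − 4 q_1'' q_1'''') (2 q_1'')^{−7/2}. Let L : {(u,v) ∈ ℝ³×ℝ³ : u_3 ≠ 0} → ℝ be the Lagrangian L(q, q_x) = ¼ q_{1,x}² − q_{2,x} q_{3,x}/(2 q_3) + q_{3,x}² q_2/(4 q_3²) + q_1/(4 q_3²) − q_2²/(4 q_3³) (this is the Stäckel Lagrangian L^{3,2,−3} with ε = −1). Then the curve q = (q_1, q_2, q_3) satisfies the Euler–Lagrange equations E_1(L)[q] = 0 and E_2(L)[q] = 0 identically, where E_i(L)[q](x) = (∂L/∂q_i)(q(x), q_x(x)) − (d/dx)[(∂L/∂q_{i,x})(q(x), q_x(x))]. Moreover, for an arbitrary smooth curve q : ℝ → ℝ³ with q_3 nonvanishing, E_1(L)[q] = 1/(4 q_3²) − ½ q_{1,xx} and E_2(L)[q] = −q_2/(2 q_3³) − q_{3,x}²/(4 q_3²) + q_{3,xx}/(2 q_3). -/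

import Mathlib

noncomputable section

/-- Euler–Lagrange expression `E_i(L)[c](x) = (∂L/∂q_i)(c x, c_x x) - d/dx [(∂L/∂q_{i,x})(c x, c_x x)]`
along a curve `c : ℝ → ℝⁿ`. -/
def EL (n : ℕ) (L : (Fin n → ℝ) → (Fin n → ℝ) → ℝ) (c : ℝ → Fin n → ℝ) (i : Fin n)
    (x : ℝ) : ℝ :=
  fderiv ℝ (fun Q => L Q (deriv c x)) (c x) (Pi.single i 1) -
    deriv (fun y => fderiv ℝ (fun V => L (c y) V) (deriv c y) (Pi.single i 1)) x

/-- The Stäckel Lagrangian `L^{3,2,-3}` with `ε = -1`, written out explicitly. -/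
def L19 (Q V : Fin 3 → ℝ) : ℝ :=
  (1 / 4) * V 0 ^ 2 - V 1 * V 2 / (2 * Q 2) + V 2 ^ 2 * Q 1 / (4 * Q 2 ^ 2) +
    Q 0 / (4 * Q 2 ^ 2) - Q 1 ^ 2 / (4 * Q 2 ^ 3)


/-!
For an arbitrary curve with `q₃ ≠ 0` the partial derivatives of `L19` are read off from its
restrictions to coordinate lines, which are polynomials of degree at most two. On the eliminated
curve put `u = 2 q₁''`, so `q₃ = u^{-1/2}` satisfies `q₃² u = 1` and `q₃' = -½ q₃³ u'`. Then
`E₁ = 1/(4 q₃²) - u/4 = 0`, and after expressing `q₃''` and `q₂ = ½ (5u'²/4 - u u'') q₃⁷` through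
`q₃, u, u', u''`, the expression `E₂` becomes a multiple of `q₃² u - 1`.
-/

open Real
open scoped ContDiff

lemma fderiv_apply_eq_of_line_quadratic {E : Type*} [NormedAddCommGroup E] [NormedSpace ℝ E]
    {f : E → ℝ} {p v : E} (hf : DifferentiableAt ℝ f p) {K m r : ℝ}
    (h : ∀ t : ℝ, f (p + t • v) = K + t * m + t ^ 2 * r) : fderiv ℝ f p v = m := by
  rw [← hf.lineDeriv_eq_fderiv, lineDeriv, funext h]
  have hquad := (((hasDerivAt_id (0 : ℝ)).mul_const m).const_add K).add
    ((hasDerivAt_pow 2 (0 : ℝ)).mul_const r)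
  exact (hquad.congr_deriv (by simp)).deriv

lemma rpow_neg_half_pow {a : ℝ} (ha : 0 ≤ a) (n : ℕ) :
    (a ^ (-(1 / 2) : ℝ)) ^ n = a ^ (-(n / 2) : ℝ) := by
  rw [← rpow_natCast, ← rpow_mul ha]
  ring_nf

lemma rpow_neg_half_sq {a : ℝ} (ha : 0 ≤ a) : (a ^ (-(1 / 2) : ℝ)) ^ 2 = a⁻¹ := by
  rw [rpow_neg_half_pow ha]
  norm_num [rpow_neg_one]

lemma hasDerivAt_rpow_neg_half {u : ℝ → ℝ} {u' x : ℝ} (hu : HasDerivAt u u' x) (hx : 0 < u x) :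
    HasDerivAt (fun y => u y ^ (-(1 / 2) : ℝ))
      (-(1 / 2) * ((u x ^ (-(1 / 2) : ℝ)) ^ 3 * u')) x := by
  convert hu.rpow_const (p := -(1 / 2)) (Or.inl hx.ne') using 1
  rw [rpow_neg_half_pow hx.le]
  norm_num
  ring

lemma deriv_apply_of_differentiableAt {ι : Type*} [Fintype ι] {c : ℝ → ι → ℝ} {y : ℝ}
    (hc : DifferentiableAt ℝ c y) (i : ι) : deriv c y i = deriv (fun t => c t i) y :=
  (hasDerivAt_pi.1 hc.hasDerivAt i).deriv.symm

section L19

lemma differentiableAt_L19_pos (v : Fin 3 → ℝ) {p : Fin 3 → ℝ} (hp : p 2 ≠ 0) :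
    DifferentiableAt ℝ (fun Q => L19 Q v) p := by
  unfold L19
  simp only [div_eq_mul_inv]
  fun_prop (disch := simp [hp])

lemma differentiable_L19_vel (p : Fin 3 → ℝ) : Differentiable ℝ (L19 p) := by
  unfold L19
  simp only [div_eq_mul_inv]
  fun_prop

lemma fderiv_L19_pos_single_zero (v : Fin 3 → ℝ) {p : Fin 3 → ℝ} (hp : p 2 ≠ 0) :
    fderiv ℝ (fun Q => L19 Q v) p (Pi.single 0 1) = 1 / (4 * p 2 ^ 2) :=
  fderiv_apply_eq_of_line_quadratic (differentiableAt_L19_pos v hp) (K := L19 p v) (r := 0)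
    fun t => by simp [L19]; ring

lemma fderiv_L19_pos_single_one (v : Fin 3 → ℝ) {p : Fin 3 → ℝ} (hp : p 2 ≠ 0) :
    fderiv ℝ (fun Q => L19 Q v) p (Pi.single 1 1) =
      v 2 ^ 2 / (4 * p 2 ^ 2) - p 1 / (2 * p 2 ^ 3) :=
  fderiv_apply_eq_of_line_quadratic (differentiableAt_L19_pos v hp) (K := L19 p v)
    (r := -(1 / (4 * p 2 ^ 3))) fun t => by simp [L19]; ring

lemma fderiv_L19_vel_single_zero (p v : Fin 3 → ℝ) :
    fderiv ℝ (L19 p) v (Pi.single 0 1) = 1 / 2 * v 0 :=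
  fderiv_apply_eq_of_line_quadratic (differentiable_L19_vel p v) (K := L19 p v) (r := 1 / 4)
    fun t => by simp [L19]; ring

lemma fderiv_L19_vel_single_one (p v : Fin 3 → ℝ) :
    fderiv ℝ (L19 p) v (Pi.single 1 1) = -(v 2 / (2 * p 2)) :=
  fderiv_apply_eq_of_line_quadratic (differentiable_L19_vel p v) (K := L19 p v) (r := 0)
    fun t => by simp [L19]; ring

variable {c : ℝ → Fin 3 → ℝ}

lemma EL_L19_zero (hc : ContDiff ℝ 2 c) {x : ℝ} (hx : c x 2 ≠ 0) :
    EL 3 L19 c 0 x = 1 / (4 * c x 2 ^ 2) - 1 / 2 * deriv (deriv fun y => c y 0) x := by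
  have hcd : Differentiable ℝ c := hc.differentiable two_ne_zero
  have hvel : (fun y => fderiv ℝ (L19 (c y)) (deriv c y) (Pi.single 0 1)) =
      fun y => 1 / 2 * deriv (fun t => c t 0) y :=
    funext fun y => by rw [fderiv_L19_vel_single_zero, deriv_apply_of_differentiableAt (hcd _)]
  have hc0 : ContDiff ℝ 2 fun t => c t 0 := contDiff_pi.1 hc 0
  rw [EL, fderiv_L19_pos_single_zero _ hx, hvel,
    deriv_const_mul _ (hc0.differentiable_deriv_two x)]

lemma EL_L19_one (hc : ContDiff ℝ 2 c) {x : ℝ} (hx : c x 2 ≠ 0) :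
    EL 3 L19 c 1 x = -c x 1 / (2 * c x 2 ^ 3) - deriv (fun y => c y 2) x ^ 2 / (4 * c x 2 ^ 2) +
      deriv (deriv fun y => c y 2) x / (2 * c x 2) := by
  have hcd : Differentiable ℝ c := hc.differentiable two_ne_zero
  have hvel : (fun y => fderiv ℝ (L19 (c y)) (deriv c y) (Pi.single 1 1)) =
      fun y => -deriv (fun t => c t 2) y / (2 * c y 2) :=
    funext fun y => by rw [fderiv_L19_vel_single_one, deriv_apply_of_differentiableAt (hcd _)]; ring
  have hc2 : ContDiff ℝ 2 fun t => c t 2 := contDiff_pi.1 hc 2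
  have hquot : HasDerivAt (fun y => -deriv (fun t => c t 2) y / (2 * c y 2)) _ x :=
    ((hc2.differentiable_deriv_two x).hasDerivAt.neg).div
    ((hc2.differentiable two_ne_zero x).hasDerivAt.const_mul 2) (by simpa using hx)
  rw [EL, fderiv_L19_pos_single_one _ hx, hvel, hquot.deriv, Pi.neg_apply,
    deriv_apply_of_differentiableAt (hcd x)]
  field_simp
  ring

lemma EL_L19_zero_eq_zero (hc : ContDiff ℝ 2 c) {x : ℝ}
    (hpos : 0 < deriv (deriv fun y => c y 0) x)
    (h2 : c x 2 = (2 * deriv (deriv fun y => c y 0) x) ^ (-(1 / 2) : ℝ)) :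
    EL 3 L19 c 0 x = 0 := by
  have hsq : c x 2 ^ 2 = (2 * deriv (deriv fun y => c y 0) x)⁻¹ := by
    rw [h2, rpow_neg_half_sq (by positivity)]
  rw [EL_L19_zero hc (by rw [h2]; positivity), hsq]
  field_simp
  ring

lemma EL_L19_one_eq_zero (hc : ContDiff ℝ 2 c) {w : ℝ → ℝ} (hw : ContDiff ℝ 2 w)
    (hpos : ∀ y, 0 < w y) (h2 : ∀ y, c y 2 = (2 * w y) ^ (-(1 / 2) : ℝ)) (x : ℝ)
    (h1 : c x 1 = 1 / 2 * (5 * deriv w x ^ 2 - 4 * w x * deriv (deriv w) x) *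
      (2 * w x) ^ (-(7 / 2) : ℝ)) :
    EL 3 L19 c 1 x = 0 := by
  set s := fun y => c y 2
  have hs : s = fun y => (2 * w y) ^ (-(1 / 2) : ℝ) := funext h2
  have hsx : s x = (2 * w x) ^ (-(1 / 2) : ℝ) := h2 x
  have hwx : 0 ≤ 2 * w x := by linarith [hpos x]
  have hds : ∀ y, HasDerivAt s (-(1 / 2) * (s y ^ 3 * (2 * deriv w y))) y := fun y => by
    rw [hs]
    exact hasDerivAt_rpow_neg_half ((hw.differentiable two_ne_zero y).hasDerivAt.const_mul 2)
      (by linarith [hpos y])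
  have hdds : HasDerivAt (deriv s)
      (-(1 / 2) * (3 * s x ^ 2 * (-(1 / 2) * (s x ^ 3 * (2 * deriv w x))) * (2 * deriv w x) +
        s x ^ 3 * (2 * deriv (deriv w) x))) x := by
    rw [funext fun y => (hds y).deriv]
    refine ((((hds x).pow 3).mul
      ((hw.differentiable_deriv_two x).hasDerivAt.const_mul 2)).const_mul _).congr_deriv ?_
    simp only [Pi.pow_apply]
    ring
  have hs7 : (2 * w x) ^ (-(7 / 2) : ℝ) = s x ^ 7 := by
    rw [hsx, rpow_neg_half_pow hwx]; norm_num
  have hsw : s x ^ 2 * (2 * w x) = 1 := by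
    rw [hsx, rpow_neg_half_sq hwx]
    exact inv_mul_cancel₀ (by linarith [hpos x])
  have hs0 : s x ≠ 0 := by rw [hsx]; have := hpos x; positivity
  rw [EL_L19_one hc hs0, hdds.deriv, (hds x).deriv, h1, hs7, show c x 2 = s x from rfl]
  field_simp
  linear_combination (8 * s x ^ 2 * deriv (deriv w) x) * hsw

end L19

theorem local_HD_elimination (q1 : ℝ → ℝ) (hq1 : ContDiff ℝ (⊤ : ℕ∞) q1)
    (hpos : ∀ x, 0 < deriv (deriv q1) x) (q2 q3 : ℝ → ℝ)
    (hq3 : ∀ x, q3 x = (2 * deriv (deriv q1) x) ^ (-(1 / 2) : ℝ))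
    (hq2 : ∀ x, q2 x = (1 / 2) *
      (5 * (deriv (deriv (deriv q1)) x) ^ 2 -
        4 * deriv (deriv q1) x * deriv (deriv (deriv (deriv q1))) x) *
      (2 * deriv (deriv q1) x) ^ (-(7 / 2) : ℝ)) :
    ((∀ x : ℝ, EL 3 L19 (fun y => ![q1 y, q2 y, q3 y]) 0 x = 0) ∧
      (∀ x : ℝ, EL 3 L19 (fun y => ![q1 y, q2 y, q3 y]) 1 x = 0)) ∧
    (∀ q : ℝ → Fin 3 → ℝ, ContDiff ℝ (⊤ : ℕ∞) q → (∀ x, q x 2 ≠ 0) → ∀ x : ℝ,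
      EL 3 L19 q 0 x = 1 / (4 * q x 2 ^ 2) - (1 / 2) * deriv (deriv fun y => q y 0) x ∧
      EL 3 L19 q 1 x = -q x 1 / (2 * q x 2 ^ 3) -
        (deriv (fun y => q y 2) x) ^ 2 / (4 * q x 2 ^ 2) +
        deriv (deriv fun y => q y 2) x / (2 * q x 2)) := by
  have h2inf : (2 : WithTop ℕ∞) ≤ ∞ := WithTop.coe_le_coe.2 le_top
  have hw : ContDiff ℝ ∞ (deriv (deriv q1)) := hq1.iterate_deriv 2
  have hq3c : ContDiff ℝ ∞ q3 := by
    rw [funext hq3]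
    exact (contDiff_const.mul hw).rpow_const_of_ne fun x => by linarith [hpos x]
  have hq2c : ContDiff ℝ ∞ q2 := by
    rw [funext hq2]
    have h3 : ContDiff ℝ ∞ (deriv (deriv (deriv q1))) := hq1.iterate_deriv 3
    have h4 : ContDiff ℝ ∞ (deriv (deriv (deriv (deriv q1)))) := hq1.iterate_deriv 4
    fun_prop (disch := intro x; linarith [hpos x])
  have hc : ContDiff ℝ 2 fun y => ![q1 y, q2 y, q3 y] := by
    refine contDiff_pi.2 fun i => ?_
    fin_cases i
    · simpa using hq1.of_le h2inf
    · simpa using hq2c.of_le h2inf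
    · simpa using hq3c.of_le h2inf
  refine ⟨⟨fun x => EL_L19_zero_eq_zero hc (hpos x) (hq3 x),
    fun x => EL_L19_one_eq_zero hc (hw.of_le h2inf) hpos hq3 x (hq2 x)⟩,
    fun q hq hne x =>
      ⟨EL_L19_zero (hq.of_le h2inf) (hne x), EL_L19_one (hq.of_le h2inf) (hne x)⟩⟩
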